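/- Let n ≥ 1, let Θ ⊆ {0,1}ⁿ with |Θ| = f where 0 ≤ f ≤ 2ⁿ − 1, and let X be uniformly distributed on {0,1}ⁿ with Y the output of the channel V_Θ on input X. Then the mutual information in bits satisfies the exact identity I(X;Y) = f·n/2ⁿ − ((2ⁿ − f)²/2^{2n})·log₂(1 − f/2ⁿ) − ((2^{n+1} − f)·f/2^{2n})·log₂(2 − f/2ⁿ). -/
import Mathlib


open scoped BigOperators

noncomputable section

/-- A probability distribution on a finite type. -/
def IsProbDist {α : Type} [Fintype α] (p : α → ℝ) : Prop :=
  (∀ a, 0 ≤ p a) ∧ (∑ a, p a) = 1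

/-- Output distribution of channel `V` under random encoder `Φ` on message `u`. -/
def Zout {U X Z : Type} [Fintype X] (Φ : U → X → ℝ) (V : X → Z → ℝ) (u : U) (z : Z) : ℝ :=
  ∑ x, Φ u x * V x z

/-- Probability that the decoder `ψ` fails on message `u`. -/
def errProb {U X Y : Type} [Fintype X] [Fintype Y] [DecidableEq U]
    (W : X → Y → ℝ) (Φ : U → X → ℝ) (ψ : Y → U) (u : U) : ℝ :=
  ∑ y, (if ψ y ≠ u then Zout Φ W u y else 0)

/-- Shannon mutual information in bits (logarithm base 2) of the joint law `p u * q u z`. -/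
def mutualInfo2 {U Z : Type} [Fintype U] [Fintype Z] (p : U → ℝ) (q : U → Z → ℝ) : ℝ :=
  ∑ u, ∑ z, p u * q u z * Real.logb 2 (q u z / (∑ v, p v * q v z))

/-- The channel `V_Θ` on `{0,1}ⁿ`: the identity channel on inputs in `Θ` and the completely
noisy (uniform-output) channel on inputs outside `Θ`. -/
def Vtheta (n : ℕ) (Θ : Finset (Fin n → Bool)) (x y : Fin n → Bool) : ℝ :=
  if x ∈ Θ then (if y = x then 1 else 0) else ((2:ℝ) ^ n)⁻¹

/-- **Statement 14.** For `Θ ⊆ {0,1}ⁿ` with `|Θ| = f ≤ 2ⁿ − 1` and `X` uniform on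
`{0,1}ⁿ` with output `Y` of `V_Θ`, the mutual information in bits satisfies the exact
identity
`I(X;Y) = f·n/2ⁿ − ((2ⁿ−f)²/2^{2n})·log₂(1 − f/2ⁿ) − ((2^{n+1}−f)·f/2^{2n})·log₂(2 − f/2ⁿ)`. -/
theorem mutualInfo_uniform_Vtheta (n : ℕ) (hn : 1 ≤ n)
    (Θ : Finset (Fin n → Bool)) (f : ℕ) (hcard : Θ.card = f) (hf : f ≤ 2 ^ n - 1) :
    mutualInfo2 (fun _ : Fin n → Bool => ((2:ℝ) ^ n)⁻¹) (Vtheta n Θ)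
      = (f : ℝ) * n / 2 ^ n
        - (((2:ℝ) ^ n - f) ^ 2 / 2 ^ (2 * n)) * Real.logb 2 (1 - (f : ℝ) / 2 ^ n)
        - (((2:ℝ) ^ (n + 1) - f) * f / 2 ^ (2 * n)) *
            Real.logb 2 (2 - (f : ℝ) / 2 ^ n) := by
  classical
  have hN1 : (1:ℕ) ≤ 2 ^ n := Nat.one_le_two_pow
  set N : ℝ := (2:ℝ) ^ n with hNdef
  have hN0 : (0:ℝ) < N := by positivity
  have hfle : (f:ℝ) ≤ N - 1 := by
    have h1 : (f:ℝ) ≤ ((2^n - 1 : ℕ) : ℝ) := by exact_mod_cast hf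
    have h2 : ((2^n - 1 : ℕ) : ℝ) = N - 1 := by
      rw [Nat.cast_sub hN1]; push_cast; rfl
    linarith [h1, h2.le]
  have hNf : (0:ℝ) < N - f := by linarith
  have h2Nf : (0:ℝ) < 2*N - f := by linarith
  have hcardC : ((Θᶜ.card : ℕ) : ℝ) = N - f := by
    rw [Finset.card_compl, hcard]
    have hfle' : f ≤ 2 ^ n := le_trans hf (Nat.sub_le _ _)
    have hcardU : Fintype.card (Fin n → Bool) = 2 ^ n := by simp
    rw [hcardU, Nat.cast_sub hfle']
    push_cast; rfl
  -- marginal distribution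
  have hmar : ∀ z : Fin n → Bool,
      (∑ v, ((2:ℝ)^n)⁻¹ * Vtheta n Θ v z)
        = if z ∈ Θ then (2*N - f)/N^2 else (N - f)/N^2 := by
    intro z
    rw [← Finset.mul_sum]
    have hsum : (∑ v, Vtheta n Θ v z)
        = (if z ∈ Θ then 1 else 0) + (N - f)/N := by
      rw [← Finset.sum_add_sum_compl Θ]
      congr 1
      · rw [show (∑ v ∈ Θ, Vtheta n Θ v z) = ∑ v ∈ Θ, (if z = v then 1 else 0) from
          Finset.sum_congr rfl (fun v hv => by simp [Vtheta, hv])]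
        rw [Finset.sum_ite_eq]
      · rw [show (∑ v ∈ Θᶜ, Vtheta n Θ v z) = ∑ v ∈ Θᶜ, N⁻¹ from
          Finset.sum_congr rfl (fun v hv => by
            simp only [Finset.mem_compl] at hv
            simp [Vtheta, hv, hNdef])]
        rw [Finset.sum_const, nsmul_eq_mul, hcardC]
        field_simp
    rw [hsum]
    by_cases hz : z ∈ Θ
    · rw [if_pos hz, if_pos hz, ← hNdef]
      field_simp
      ring
    · rw [if_neg hz, if_neg hz, ← hNdef, zero_add, inv_mul_eq_div, div_div, pow_two]
  -- inner sums
  have hin : ∀ x ∈ Θ, (∑ z, (fun _ : Fin n → Bool => ((2:ℝ)^n)⁻¹) x * Vtheta n Θ x z *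
      Real.logb 2 (Vtheta n Θ x z / ∑ v, (fun _ : Fin n → Bool => ((2:ℝ)^n)⁻¹) v * Vtheta n Θ v z))
      = N⁻¹ * Real.logb 2 (N^2/(2*N - f)) := by
    intro x hx
    rw [Finset.sum_eq_single x]
    · rw [hmar x, if_pos hx]
      have h1 : Vtheta n Θ x x = 1 := by simp [Vtheta, hx]
      simp only [h1, ← hNdef, mul_one, one_div, inv_div]
    · intro z _ hz
      simp [Vtheta, hx, hz]
    · intro h; exact absurd (Finset.mem_univ x) h
  have hout : ∀ x ∉ Θ, (∑ z, (fun _ : Fin n → Bool => ((2:ℝ)^n)⁻¹) x * Vtheta n Θ x z *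
      Real.logb 2 (Vtheta n Θ x z / ∑ v, (fun _ : Fin n → Bool => ((2:ℝ)^n)⁻¹) v * Vtheta n Θ v z))
      = (f:ℝ) * (N⁻¹ * N⁻¹ * Real.logb 2 (N/(2*N - f)))
        + (N - f) * (N⁻¹ * N⁻¹ * Real.logb 2 (N/(N - f))) := by
    intro x hx
    have hq : ∀ z, Vtheta n Θ x z = N⁻¹ := fun z => by simp [Vtheta, hx, hNdef]
    have ha : N⁻¹ / ((2*N - f)/N^2) = N/(2*N - f) := by
      field_simp
    have hb : N⁻¹ / ((N - f)/N^2) = N/(N - f) := by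
      field_simp
    calc (∑ z, (fun _ : Fin n → Bool => ((2:ℝ)^n)⁻¹) x * Vtheta n Θ x z *
          Real.logb 2 (Vtheta n Θ x z / ∑ v, (fun _ : Fin n → Bool => ((2:ℝ)^n)⁻¹) v * Vtheta n Θ v z))
        = ∑ z, N⁻¹ * N⁻¹ *
            Real.logb 2 (if z ∈ Θ then N/(2*N - f) else N/(N - f)) := by
          refine Finset.sum_congr rfl (fun z _ => ?_)
          rw [hq z, hmar z, ← hNdef]
          by_cases hz : z ∈ Θ <;> simp [hz, ha, hb]
      _ = ∑ z ∈ Θ, (N⁻¹ * N⁻¹ * Real.logb 2 (N/(2*N - f)))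
          + ∑ z ∈ Θᶜ, (N⁻¹ * N⁻¹ * Real.logb 2 (N/(N - f))) := by
          rw [← Finset.sum_add_sum_compl Θ]
          congr 1
          · exact Finset.sum_congr rfl (fun z hz => by rw [if_pos hz])
          · exact Finset.sum_congr rfl (fun z hz => by
              rw [if_neg (Finset.mem_compl.mp hz)])
      _ = _ := by
          simp only [Finset.sum_const, nsmul_eq_mul, hcard, hcardC]
  -- assemble
  have hmain : mutualInfo2 (fun _ : Fin n → Bool => ((2:ℝ) ^ n)⁻¹) (Vtheta n Θ)
      = (f:ℝ) * (N⁻¹ * Real.logb 2 (N^2/(2*N - f)))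
        + (N - f) * ((f:ℝ) * (N⁻¹ * N⁻¹ * Real.logb 2 (N/(2*N - f)))
            + (N - f) * (N⁻¹ * N⁻¹ * Real.logb 2 (N/(N - f)))) := by
    rw [mutualInfo2, ← Finset.sum_add_sum_compl Θ]
    congr 1
    · rw [Finset.sum_congr rfl hin]
      simp only [Finset.sum_const, nsmul_eq_mul, hcard]
    · rw [Finset.sum_congr rfl (fun x hx => hout x (Finset.mem_compl.mp hx))]
      simp only [Finset.sum_const, nsmul_eq_mul, hcardC]
  rw [hmain]
  -- log algebra
  have hlogN : Real.logb 2 N = n := by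
    rw [hNdef, Real.logb_pow, Real.logb_self_eq_one] <;> norm_num
  have hL1 : Real.logb 2 (N^2/(2*N - f)) = 2*n - Real.logb 2 (2*N - f) := by
    rw [Real.logb_div (by positivity) h2Nf.ne', Real.logb_pow, hlogN]; ring
  have hL2 : Real.logb 2 (N/(2*N - f)) = n - Real.logb 2 (2*N - f) := by
    rw [Real.logb_div hN0.ne' h2Nf.ne', hlogN]
  have hL3 : Real.logb 2 (N/(N - f)) = n - Real.logb 2 (N - f) := by
    rw [Real.logb_div hN0.ne' hNf.ne', hlogN]
  have hR1 : (1 : ℝ) - (f:ℝ)/N = (N - f)/N := by field_simp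
  have hR2 : (2 : ℝ) - (f:ℝ)/N = (2*N - f)/N := by field_simp; try ring
  have hR1' : Real.logb 2 (1 - (f:ℝ)/N) = Real.logb 2 (N - f) - n := by
    rw [hR1, Real.logb_div hNf.ne' hN0.ne', hlogN]
  have hR2' : Real.logb 2 (2 - (f:ℝ)/N) = Real.logb 2 (2*N - f) - n := by
    rw [hR2, Real.logb_div h2Nf.ne' hN0.ne', hlogN]
  have h2n : (2:ℝ)^(2*n) = N^2 := by rw [two_mul, pow_add, hNdef]; ring
  have h2n1 : (2:ℝ)^(n+1) = 2*N := by rw [pow_succ, hNdef]; ring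
  rw [hL1, hL2, hL3, hR1', hR2', h2n, h2n1]
  field_simp
  ring


end
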